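/- The mean of the generalized Poisson distribution \mathcal{P}(\lambda, m) is \lambda + m, i.e. \sum_{j=0}^\infty j\, p_j(\lambda, m) = \lambda + m. -/

import Mathlib

/-!
Write `λ = a²`. Up to the factor `e^{-a²} / (j! m!)`, `p_j(λ, m)` is the square of
`c_{j,m}`, the `j`-th derivative at `0` of `(x - a)^m e^{a x}`; this is the Laguerre form of the
matrix elements of a displacement operator. These coefficients obey the two ladder recurrences
`c_{j+1,m+1} = (j+1) c_{j,m} - a c_{j+1,m} = (m+1) c_{j,m} + a c_{j,m+1}`, which give the
orthogonality `∑_k c_{k,m} c_{k,m'} / k! = δ_{m m'} m! e^{a²}` by induction on `m`. Expanding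
`c_{k+1,m}` with the second recurrence then gives `∑_j j c_{j,m}² / j! = m! (a² + m) e^{a²}`.
-/

/-- The generalized Laguerre polynomial
`L_k^{(α)}(x) = ∑_{i=0}^k (k+α choose k-i) (-x)^i / i!` (nonnegative integer
parameter `α`). -/
noncomputable def lag (k α : ℕ) (x : ℝ) : ℝ :=
  ∑ i ∈ Finset.range (k + 1),
    ((k + α).choose (k - i) : ℝ) * (-x) ^ i / (Nat.factorial i : ℝ)

/-- The photon-counting probabilities
`p_j(λ,m) = ((m∧j)!/(m∨j)!) λ^{|m-j|} e^{-λ} (L_{m∧j}^{(|m-j|)}(λ))²`. -/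
noncomputable def pgen (lam : ℝ) (m j : ℕ) : ℝ :=
  ((Nat.factorial (min m j) : ℝ) / (Nat.factorial (max m j) : ℝ)) *
    lam ^ (max m j - min m j) * Real.exp (-lam) *
    (lag (min m j) (max m j - min m j) lam) ^ 2

open Finset
open scoped Nat

-- Leibniz expansion of the `j`-th derivative at `0` of `(x - a)^m e^{a x}`; the truncated
-- `j - i` only occurs where `j.choose i = 0`.
noncomputable def dispCoeff (a : ℝ) (j m : ℕ) : ℝ :=
  ∑ i ∈ range (m + 1), (j.choose i * m.choose i * i ! : ℝ) * a ^ (j - i) * (-a) ^ (m - i)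

namespace dispCoeff

variable (a : ℝ)

lemma eq_sum_range_of_le {m N : ℕ} (j : ℕ) (h : m ≤ N) :
    dispCoeff a j m =
      ∑ i ∈ range (N + 1), (j.choose i * m.choose i * i ! : ℝ) * a ^ (j - i) * (-a) ^ (m - i) := by
  refine sum_subset (range_subset_range.2 (by omega)) fun i _ hi => ?_
  rw [Nat.choose_eq_zero_of_lt (n := m) (by simpa using hi)]
  simp

lemma comm (j m : ℕ) : dispCoeff a j m = dispCoeff (-a) m j := by
  rw [eq_sum_range_of_le a j (le_add_left le_rfl : m ≤ j + m),
    eq_sum_range_of_le (-a) m (le_add_right le_rfl : j ≤ j + m)]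
  refine sum_congr rfl fun i _ => ?_
  rw [neg_neg]
  ring

@[simp] lemma zero_right (j : ℕ) : dispCoeff a j 0 = a ^ j := by
  simp [dispCoeff]

@[simp] lemma zero_left (m : ℕ) : dispCoeff a 0 m = (-a) ^ m := by
  rw [comm, zero_right]

lemma succ_succ (j m : ℕ) :
    dispCoeff a (j + 1) (m + 1) = (j + 1) * dispCoeff a j m - a * dispCoeff a (j + 1) m := by
  have hL : dispCoeff a (j + 1) (m + 1) = _ := sum_range_succ' _ _
  have hR : dispCoeff a (j + 1) m = _ :=
    (eq_sum_range_of_le a (j + 1) (Nat.le_succ m)).trans (sum_range_succ' _ _)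
  rw [hL, hR, dispCoeff, mul_add, mul_sum, mul_sum, ← sub_sub, ← sum_sub_distrib]
  congr 1
  · refine sum_congr rfl fun i hi => ?_
    have hpascal : (j + 1 : ℝ) * j.choose i = (j + 1).choose (i + 1) * (i + 1) := by
      exact_mod_cast Nat.add_one_mul_choose_eq j i
    rw [Nat.choose_succ_succ' m, Nat.factorial_succ]
    simp only [Nat.add_sub_add_right]
    push_cast
    rcases (Nat.lt_succ_iff.1 (mem_range.1 hi)).lt_or_eq with hlt | rfl
    · obtain ⟨d, rfl⟩ := Nat.exists_eq_add_of_lt hlt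
      rw [show i + d + 1 - i = d + 1 by omega, show i + d + 1 - (i + 1) = d by omega]
      linear_combination (-(i + d + 1).choose i * i ! * a ^ (j - i) * (-a) ^ (d + 1) : ℝ) * hpascal
    · simp only [Nat.choose_succ_self, Nat.choose_self, Nat.sub_self]
      linear_combination (-i ! * a ^ (j - i) : ℝ) * hpascal
  · simp only [Nat.choose_zero_right, Nat.cast_one, mul_one, Nat.factorial_zero, tsub_zero,
      one_mul]
    ring

lemma succ_succ' (j m : ℕ) :
    dispCoeff a (j + 1) (m + 1) = (m + 1) * dispCoeff a j m + a * dispCoeff a j (m + 1) := by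
  rw [comm, succ_succ, ← comm, ← comm]
  ring

end dispCoeff

lemma dispCoeff_eq_lag (a : ℝ) {j m : ℕ} (h : m ≤ j) :
    dispCoeff a j m = m ! * a ^ (j - m) * lag m (j - m) (a ^ 2) := by
  obtain ⟨d, rfl⟩ := Nat.exists_eq_add_of_le h
  rw [Nat.add_sub_cancel_left, lag, ← sum_range_reflect, mul_sum, dispCoeff]
  refine sum_congr rfl fun i hi => ?_
  obtain ⟨p, rfl⟩ := Nat.exists_eq_add_of_le (Nat.lt_succ_iff.1 (mem_range.1 hi))
  have hfact : ((i + p).choose i * i ! * p ! : ℝ) = (i + p)! := by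
    have := Nat.choose_mul_factorial_mul_factorial (Nat.le_add_right i p)
    rw [Nat.add_sub_cancel_left] at this
    exact_mod_cast this
  rw [show i + p + 1 - 1 - i = p by omega, show i + p - p = i by omega,
    show i + p + d - i = p + d by omega, show i + p - i = p by omega, ← hfact]
  field_simp
  ring

lemma pgen_comm (lam : ℝ) (m j : ℕ) : pgen lam m j = pgen lam j m := by
  simp only [pgen, min_comm, max_comm]

lemma pgen_sq_eq_of_le (a : ℝ) {m j : ℕ} (h : m ≤ j) :
    pgen (a ^ 2) m j = Real.exp (-a ^ 2) * dispCoeff a j m ^ 2 / (j ! * m !) := by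
  rw [pgen, min_eq_left h, max_eq_right h, dispCoeff_eq_lag a h]
  field_simp
  ring

lemma pgen_sq_eq (a : ℝ) (m j : ℕ) :
    pgen (a ^ 2) m j = Real.exp (-a ^ 2) * dispCoeff a j m ^ 2 / (j ! * m !) := by
  rcases le_total m j with h | h
  · exact pgen_sq_eq_of_le a h
  · rw [pgen_comm, ← neg_sq a, pgen_sq_eq_of_le (-a) h, ← dispCoeff.comm, mul_comm (j ! : ℝ)]

lemma hasSum_dispCoeff_succ_mul (a : ℝ) {m m' : ℕ} {u v : ℝ}
    (hu : HasSum (fun k ↦ dispCoeff a k m * dispCoeff a (k + 1) m' / k !) u)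
    (hv : HasSum (fun k ↦ dispCoeff a k m * dispCoeff a k m' / k !) v) :
    HasSum (fun k ↦ dispCoeff a k (m + 1) * dispCoeff a k m' / k !) (u - a * v) := by
  rw [← hasSum_nat_add_iff' 1]
  convert hu.sub (((hasSum_nat_add_iff' 1).2 hv).mul_left a) using 1
  · funext k
    rw [dispCoeff.succ_succ, Nat.factorial_succ]
    push_cast
    field_simp
  · simp only [range_one, sum_singleton, dispCoeff.zero_left, Nat.factorial_zero, Nat.cast_one,
      div_one]
    ring

lemma hasSum_dispCoeff_zero_mul_zero (a : ℝ) :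
    HasSum (fun k ↦ dispCoeff a k 0 * dispCoeff a k 0 / k !) (Real.exp (a ^ 2)) := by
  rw [Real.exp_eq_exp_ℝ]
  refine (NormedSpace.expSeries_div_hasSum_exp (a ^ 2)).congr_fun fun k ↦ ?_
  rw [dispCoeff.zero_right, ← mul_pow, ← sq]

lemma hasSum_dispCoeff_mul_zero (a : ℝ) (m : ℕ) :
    HasSum (fun k ↦ dispCoeff a k m * dispCoeff a k 0 / k !)
      (if m = 0 then Real.exp (a ^ 2) else 0) := by
  cases m with
  | zero => simpa using hasSum_dispCoeff_zero_mul_zero a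
  | succ m =>
    have hv := hasSum_dispCoeff_mul_zero a m
    have hu : HasSum (fun k ↦ dispCoeff a k m * dispCoeff a (k + 1) 0 / k !) _ :=
      (hv.mul_left a).congr_fun fun k ↦ by
        rw [dispCoeff.zero_right, dispCoeff.zero_right, pow_succ]
        ring
    simpa using hasSum_dispCoeff_succ_mul a hu hv

lemma hasSum_dispCoeff_mul (a : ℝ) (m m' : ℕ) :
    HasSum (fun k ↦ dispCoeff a k m * dispCoeff a k m' / k !)
      (if m = m' then m ! * Real.exp (a ^ 2) else 0) := by
  induction m generalizing m' with
  | zero =>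
    have h := hasSum_dispCoeff_mul_zero a m'
    simp only [mul_comm (dispCoeff a _ m')] at h
    simpa [eq_comm] using h
  | succ m ih =>
    cases m' with
    | zero => simpa using hasSum_dispCoeff_mul_zero a (m + 1)
    | succ n =>
      have hu := ((ih n).mul_left ((n : ℝ) + 1)).add ((ih (n + 1)).mul_left a)
      convert hasSum_dispCoeff_succ_mul a (hu.congr_fun fun k ↦ ?_) (ih (n + 1)) using 1
      · by_cases hmn : m = n
        · subst hmn
          simp [Nat.factorial_succ, mul_assoc]
        · simp [hmn]
      · rw [dispCoeff.succ_succ']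
        ring

lemma hasSum_dispCoeff_succ_sq (a : ℝ) (m : ℕ) :
    HasSum (fun k ↦ dispCoeff a (k + 1) m ^ 2 / k !) (m ! * (a ^ 2 + m) * Real.exp (a ^ 2)) := by
  cases m with
  | zero =>
    rw [Nat.factorial_zero, Nat.cast_one, Nat.cast_zero, add_zero, one_mul]
    refine ((hasSum_dispCoeff_zero_mul_zero a).mul_left (a ^ 2)).congr_fun fun k ↦ ?_
    simp only [dispCoeff.zero_right]
    ring
  | succ n =>
    have h := (((hasSum_dispCoeff_mul a n n).mul_left (((n : ℝ) + 1) ^ 2)).add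
      ((hasSum_dispCoeff_mul a n (n + 1)).mul_left (2 * a * (n + 1)))).add
      ((hasSum_dispCoeff_mul a (n + 1) (n + 1)).mul_left (a ^ 2))
    rw [if_pos rfl, if_neg n.succ_ne_self.symm, if_pos rfl] at h
    have hval : ((n + 1)! * (a ^ 2 + (n + 1 : ℕ)) * Real.exp (a ^ 2) : ℝ) =
        (n + 1) ^ 2 * (n ! * Real.exp (a ^ 2)) + 2 * a * (n + 1) * 0 +
          a ^ 2 * ((n + 1)! * Real.exp (a ^ 2)) := by
      push_cast [Nat.factorial_succ]
      ring
    rw [hval]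
    refine h.congr_fun fun k ↦ ?_
    rw [dispCoeff.succ_succ']
    ring

lemma hasSum_mul_dispCoeff_sq (a : ℝ) (m : ℕ) :
    HasSum (fun j ↦ j * dispCoeff a j m ^ 2 / j !) (m ! * (a ^ 2 + m) * Real.exp (a ^ 2)) := by
  have h : HasSum (fun k ↦ ((k + 1 : ℕ) : ℝ) * dispCoeff a (k + 1) m ^ 2 / (k + 1)!) _ :=
    (hasSum_dispCoeff_succ_sq a m).congr_fun fun k ↦ by
      rw [Nat.factorial_succ]
      push_cast
      field_simp
  convert HasSum.zero_add (f := fun j : ℕ ↦ (j : ℝ) * dispCoeff a j m ^ 2 / j !) h using 1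
  simp

/-- The mean of the generalized Poisson distribution `𝒫(λ,m)` is `λ + m`. -/
theorem pgen_mean (lam : ℝ) (hlam : 0 < lam) (m : ℕ) :
    ∑' j : ℕ, (j : ℝ) * pgen lam m j = lam + m := by
  obtain ⟨a, rfl⟩ : ∃ a : ℝ, a ^ 2 = lam := ⟨√lam, Real.sq_sqrt hlam.le⟩
  have h := (hasSum_mul_dispCoeff_sq a m).mul_left (Real.exp (-a ^ 2) / m !)
  rw [(h.congr_fun fun j ↦ ?_).tsum_eq]
  · field_simp
    rw [← Real.exp_add, neg_add_cancel, Real.exp_zero]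
  · rw [pgen_sq_eq]
    field_simp
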